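/- arXiv:2503.03757 — 5 statements merged into one kernel-verified Lean document; each statement's English description precedes it below -/
import Mathlib

section
/- The function u_{0110}(x,t) = e^{−2it} (1 − 1/(x + 2it)) satisfies the nonlocal NLS equation i u_t(x,t) = u_xx(x,t) + 2 u(x,t)^2 u*(−x,t) at every real point (x,t) ≠ (0,0). -/
open scoped BigOperators

/-- Schur polynomials with values in a commutative `ℂ`-algebra, defined by the explicit
partition-sum formula `S_k(x) = Σ_{l₁+2l₂+⋯+k·l_k = k} ∏_{i=1}^k x_i^{l_i}/l_i!`
coming from the generating function `Σ_k S_k(x) ε^k = exp(Σ_{j≥1} x_j ε^j)`. -/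
noncomputable def schurA {A : Type*} [CommRing A] [Algebra ℂ A] (x : ℕ → A) (k : ℕ) : A :=
  ∑ l ∈ Finset.filter
      (fun l : Fin k → Fin (k + 1) => ∑ i : Fin k, ((i : ℕ) + 1) * (l i : ℕ) = k) Finset.univ,
    ∏ i : Fin k,
      algebraMap ℂ A (((l i : ℕ).factorial : ℂ))⁻¹ * x ((i : ℕ) + 1) ^ (l i : ℕ)

/-- The complex-valued Schur polynomial `S_k(x)`. -/
noncomputable def schurC (x : ℕ → ℂ) (k : ℕ) : ℂ := schurA x k

/-- Schur polynomial with integer index, with the convention `S_k ≡ 0` for `k < 0`. -/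
noncomputable def schurZ (x : ℕ → ℂ) (k : ℤ) : ℂ := if 0 ≤ k then schurC x k.toNat else 0

/-- The function `λ ↦ ln((2/λ) tanh(λ/2))`, extended by the value `0` at `λ = 0`. -/
noncomputable def fS (lam : ℂ) : ℂ :=
  if lam = 0 then 0 else Complex.log (2 / lam * Complex.tanh (lam / 2))

/-- The Taylor coefficients `s_k` of `ln((2/λ) tanh(λ/2))` at `λ = 0`. -/
noncomputable def sCoeff (k : ℕ) : ℂ := iteratedDeriv k fS 0 / (k.factorial : ℂ)

/-- The sequence `x⁺(n) = (x₁⁺, 0, x₃⁺, 0, …)` with `x₁⁺(n) = x - 2it + n + a₁` and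
`x⁺_{2k+1} = (x - 2^{2k+1} i t)/(2k+1)! + a_{2k+1}`. -/
noncomputable def xPlus (a : ℕ → ℂ) (x t : ℝ) (n : ℕ) : ℕ → ℂ := fun m =>
  if m = 1 then (x : ℂ) - 2 * Complex.I * (t : ℂ) + (n : ℂ) + a 1
  else if m % 2 = 1 then ((x : ℂ) - 2 ^ m * Complex.I * (t : ℂ)) / (m.factorial : ℂ) + a m
  else 0

/-- The sequence `x⁻(n) = (x₁⁻, 0, x₃⁻, 0, …)` with `x₁⁻(n) = x + 2it - n + b₁` and
`x⁻_{2k+1} = (x + 2^{2k+1} i t)/(2k+1)! + b_{2k+1}`. -/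
noncomputable def xMinus (b : ℕ → ℂ) (x t : ℝ) (n : ℕ) : ℕ → ℂ := fun m =>
  if m = 1 then (x : ℂ) + 2 * Complex.I * (t : ℂ) - (n : ℂ) + b 1
  else if m % 2 = 1 then ((x : ℂ) + 2 ^ m * Complex.I * (t : ℂ)) / (m.factorial : ℂ) + b m
  else 0

/-- The matrix element `m_{i,j} = Σ_{v=0}^{min(i,j)} 4^{-v} S_{i-v}(x⁺ + v s) S_{j-v}(x⁻ + v s)`. -/
noncomputable def mGen (xp xm s : ℕ → ℂ) (i j : ℕ) : ℂ :=
  ∑ v ∈ Finset.range (min i j + 1),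
    ((4 : ℂ) ^ v)⁻¹ * schurC (fun m => xp m + (v : ℂ) * s m) (i - v) *
      schurC (fun m => xm m + (v : ℂ) * s m) (j - v)

/-- The τ-function `σ_n`: determinant of the 2×2 block matrix with blocks
`Γ_{i,j}^{(n)} = (m_{2k-i,2l-j}^{(n)})`. -/
noncomputable def sigmaTau (N₁ N₂ M₁ M₂ : ℕ) (a b : ℕ → ℂ) (n : ℕ) (x t : ℝ) : ℂ :=
  Matrix.det (Matrix.of fun r c : Fin (N₁ + N₂) =>
    mGen (xPlus a x t n) (xMinus b x t n) sCoeff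
      (if (r : ℕ) < N₁ then 2 * (r : ℕ) + 1 else 2 * ((r : ℕ) - N₁))
      (if (c : ℕ) < M₁ then 2 * (c : ℕ) + 1 else 2 * ((c : ℕ) - M₁)))

/-- The rational solution `u_{N₁,N₂,M₁,M₂}(x,t) = e^{-2it} σ₁/σ₀`. -/
noncomputable def uSol (N₁ N₂ M₁ M₂ : ℕ) (a b : ℕ → ℂ) (x t : ℝ) : ℂ :=
  Complex.exp (-2 * Complex.I * (t : ℂ)) *
    sigmaTau N₁ N₂ M₁ M₂ a b 1 x t / sigmaTau N₁ N₂ M₁ M₂ a b 0 x t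

/-- The nonlocal NLS equation `i u_t(x,t) = u_xx(x,t) + 2 u(x,t)² u*(-x,t)` at the point `(x,t)`. -/
def nlnls (u : ℝ → ℝ → ℂ) (x t : ℝ) : Prop :=
  Complex.I * deriv (fun s : ℝ => u x s) t =
    deriv (fun y : ℝ => deriv (fun w : ℝ => u w t) y) x +
      2 * u x t ^ 2 * (starRingEnd ℂ) (u (-x) t)

/-- `u_{0110}(x,t) = e^{-2it}(1 - 1/(x + 2it))`. -/
noncomputable def u0110 (x t : ℝ) : ℂ :=
  Complex.exp (-2 * Complex.I * (t : ℂ)) * (1 - 1 / ((x : ℂ) + 2 * Complex.I * (t : ℂ)))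

/-- `u_{1001}(x,t) = e^{-2it}(1 + 1/(x - 2it))`. -/
noncomputable def u1001 (x t : ℝ) : ℂ :=
  Complex.exp (-2 * Complex.I * (t : ℂ)) * (1 + 1 / ((x : ℂ) - 2 * Complex.I * (t : ℂ)))

/-- `u_{1010}(x,t) = e^{-2it}(1 + (16it - 4)/(16t² + 4x² + 1))`. -/
noncomputable def u1010 (x t : ℝ) : ℂ :=
  Complex.exp (-2 * Complex.I * (t : ℂ)) *
    (1 + (16 * Complex.I * (t : ℂ) - 4) / (16 * (t : ℂ) ^ 2 + 4 * (x : ℂ) ^ 2 + 1))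

/-- The sequence `(z, 0, κ₁, 0, κ₂, 0, …)`: entry `1` is `z`, entry `2j+1` is `κ_j` for `j ≥ 1`,
even entries vanish.  Feeding it to Schur polynomials realises the generating function
`Σ_k θ_k(z) ε^k = exp(zε + Σ_{j≥1} κ_j ε^{2j+1})`. -/
noncomputable def thetaSeq (κ : ℕ → ℂ) (z : ℂ) : ℕ → ℂ := fun m =>
  if m = 1 then z else if m % 2 = 1 ∧ 3 ≤ m then κ ((m - 1) / 2) else 0

/-- The polynomials `θ_k(z)` of the Adler–Moser construction, as functions of `z`. -/
noncomputable def thetaFun (κ : ℕ → ℂ) (k : ℕ) : ℂ → ℂ := fun z => schurC (thetaSeq κ z) k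

/-- `θ_k(z)` with integer index, with `θ_k ≡ 0` for `k < 0`. -/
noncomputable def thetaFunZ (κ : ℕ → ℂ) (k : ℤ) : ℂ → ℂ := fun z =>
  if 0 ≤ k then thetaFun κ k.toNat z else 0

/-- `c_N = ∏_{j=1}^N (2j-1)!!`. -/
def cDF (N : ℕ) : ℕ := ∏ j ∈ Finset.range N, Nat.doubleFactorial (2 * j + 1)

/-- The Adler–Moser polynomial `Θ_N(z) = c_N det_{1≤i,j≤N}[θ_{2i-j}(z)]`, as a function of `z`. -/
noncomputable def adlerMoserFun (κ : ℕ → ℂ) (N : ℕ) (z : ℂ) : ℂ :=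
  (cDF N : ℂ) * Matrix.det (Matrix.of fun i j : Fin N =>
    thetaFunZ κ (2 * (i : ℤ) + 1 - (j : ℤ)) z)

/-- `θ_k` as an element of `Polynomial ℂ`. -/
noncomputable def thetaPoly (κ : ℕ → ℂ) (k : ℕ) : Polynomial ℂ :=
  schurA (fun m => if m = 1 then Polynomial.X
    else if m % 2 = 1 ∧ 3 ≤ m then Polynomial.C (κ ((m - 1) / 2)) else 0) k

/-- `θ_k` as a polynomial, with integer index and `θ_k ≡ 0` for `k < 0`. -/
noncomputable def thetaPolyZ (κ : ℕ → ℂ) (k : ℤ) : Polynomial ℂ :=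
  if 0 ≤ k then thetaPoly κ k.toNat else 0

/-- The Adler–Moser polynomial `Θ_N = c_N det[θ_{2i-j}]` as an element of `Polynomial ℂ`. -/
noncomputable def adlerMoserPoly (κ : ℕ → ℂ) (N : ℕ) : Polynomial ℂ :=
  Polynomial.C ((cDF N : ℂ)) * Matrix.det (Matrix.of fun i j : Fin N =>
    thetaPolyZ κ (2 * (i : ℤ) + 1 - (j : ℤ)))

/-- `δ_N = N₁ - N₂` if `N₁ ≥ N₂`, and `N₂ - N₁ - 1` otherwise. -/
def deltaIdx (N₁ N₂ : ℕ) : ℕ := if N₂ ≤ N₁ then N₁ - N₂ else N₂ - N₁ - 1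

/-- The large-parameter scaling `a_{2j+1} = κ_j A^{2j+1}` (with `a₁ = 0` and even entries `0`). -/
noncomputable def paramSeq (κ : ℕ → ℂ) (A : ℝ) : ℕ → ℂ := fun m =>
  if m % 2 = 1 ∧ 3 ≤ m then κ ((m - 1) / 2) * (A : ℂ) ^ m else 0
/-!
`u0110` is the ansatz `e^{-2it} w(x + 2it)` with profile `w z = 1 - 1/z`. For any holomorphic
profile, `∂ₜ` and `∂ₓ` act on the ansatz through `w'`, and the reflection `x ↦ -x` sends
`z = x + 2it` to `-z̄`, so the nonlocal NLS equation becomes the pointwise identity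
`2w - 2w' = w'' + 2w² · conj (w (-z̄))` at `z`. For `w = 1 - 1/z` the conjugate factor is
`1 + 1/z` and the identity is rational, valid away from the pole `z = 0`, i.e. for
`(x, t) ≠ (0, 0)`.
-/

open Complex

noncomputable def nlsAnsatz (w : ℂ → ℂ) (x t : ℝ) : ℂ :=
  exp (-2 * I * t) * w (x + 2 * I * t)

theorem ofReal_add_two_mul_I_mul_ofReal_ne_zero {x t : ℝ} (h : (x, t) ≠ (0, 0)) :
    (x : ℂ) + 2 * I * t ≠ 0 := by
  contrapose! h
  have hre := congrArg re h
  have him := congrArg im h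
  simp at hre him
  simp [hre, him]

section nlsAnsatz

variable {w : ℂ → ℂ} {x t : ℝ}

theorem hasDerivAt_nlsAnsatz_time (hw : DifferentiableAt ℂ w (x + 2 * I * t)) :
    HasDerivAt (fun s => nlsAnsatz w x s)
      (exp (-2 * I * t) * (2 * I * deriv w (x + 2 * I * t) - 2 * I * w (x + 2 * I * t))) t := by
  have hexp : HasDerivAt (fun s : ℂ => exp (-2 * I * s)) (exp (-2 * I * t) * (-2 * I)) t := by
    simpa using ((hasDerivAt_id (t : ℂ)).const_mul (-2 * I)).cexp
  have hline : HasDerivAt (fun s : ℂ => (x : ℂ) + 2 * I * s) (2 * I) t := by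
    simpa using ((hasDerivAt_id (t : ℂ)).const_mul (2 * I)).const_add (x : ℂ)
  refine (hexp.mul (hw.hasDerivAt.comp (t : ℂ) hline)).comp_ofReal.congr_deriv ?_
  simp only [Function.comp_apply]
  ring

theorem hasDerivAt_nlsAnsatz_space (hw : DifferentiableAt ℂ w (x + 2 * I * t)) :
    HasDerivAt (fun y => nlsAnsatz w y t) (exp (-2 * I * t) * deriv w (x + 2 * I * t)) x := by
  have hline : HasDerivAt (fun y : ℂ => y + 2 * I * t) 1 x := (hasDerivAt_id _).add_const _
  exact ((hw.hasDerivAt.comp (x : ℂ) hline).const_mul (exp (-2 * I * t))).comp_ofReal.congr_deriv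
    (by rw [mul_one])

theorem deriv_deriv_nlsAnsatz_space {U : Set ℂ} (hw : DifferentiableOn ℂ w U) (hU : IsOpen U)
    (hz : (x : ℂ) + 2 * I * t ∈ U) :
    deriv (fun y => deriv (fun v => nlsAnsatz w v t) y) x =
      exp (-2 * I * t) * deriv (deriv w) (x + 2 * I * t) := by
  have hnhds : ∀ᶠ y : ℝ in nhds x, (y : ℂ) + 2 * I * t ∈ U :=
    (continuous_ofReal.add continuous_const).continuousAt.preimage_mem_nhds (hU.mem_nhds hz)
  have heq : (fun y => deriv (fun v => nlsAnsatz w v t) y) =ᶠ[nhds x]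
      fun y => nlsAnsatz (deriv w) y t := by
    filter_upwards [hnhds] with y hy
    exact (hasDerivAt_nlsAnsatz_space (hw.differentiableAt (hU.mem_nhds hy))).deriv
  rw [heq.deriv_eq]
  exact (hasDerivAt_nlsAnsatz_space
    ((hw.deriv hU).differentiableAt (hU.mem_nhds hz))).deriv

theorem conj_nlsAnsatz_neg :
    starRingEnd ℂ (nlsAnsatz w (-x) t) =
      exp (2 * I * t) * starRingEnd ℂ (w (-starRingEnd ℂ (x + 2 * I * t))) := by
  have hneg : ((-x : ℝ) : ℂ) + 2 * I * t = -starRingEnd ℂ (x + 2 * I * t) := by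
    simp [Complex.ext_iff]
  rw [nlsAnsatz, hneg, map_mul, ← exp_conj]
  congr 2
  simp [map_ofNat]

theorem nlnls_nlsAnsatz {U : Set ℂ} (hw : DifferentiableOn ℂ w U) (hU : IsOpen U)
    (hz : (x : ℂ) + 2 * I * t ∈ U)
    (hprofile : 2 * w (x + 2 * I * t) - 2 * deriv w (x + 2 * I * t) =
      deriv (deriv w) (x + 2 * I * t) +
        2 * w (x + 2 * I * t) ^ 2 * starRingEnd ℂ (w (-starRingEnd ℂ (x + 2 * I * t)))) :
    nlnls (nlsAnsatz w) x t := by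
  have hwz := hw.differentiableAt (hU.mem_nhds hz)
  have hexp : exp (-2 * I * t) * exp (2 * I * t) = 1 := by
    rw [← exp_add]
    simp
  rw [nlnls, (hasDerivAt_nlsAnsatz_time hwz).deriv, deriv_deriv_nlsAnsatz_space hw hU hz,
    conj_nlsAnsatz_neg]
  simp only [nlsAnsatz]
  set z : ℂ := x + 2 * I * t
  set E := exp (-2 * I * t)
  linear_combination E * hprofile + 2 * E * (deriv w z - w z) * I_sq
    - 2 * E * w z ^ 2 * starRingEnd ℂ (w (-starRingEnd ℂ z)) * hexp

end nlsAnsatz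

section rationalProfile

variable {𝕜 : Type*} [NontriviallyNormedField 𝕜]

theorem deriv_one_sub_one_div : deriv (fun z : 𝕜 => 1 - 1 / z) = fun z => 1 / z ^ 2 := by
  funext z
  simp [one_div, deriv_const_sub]

theorem deriv_one_div_sq {z : 𝕜} (hz : z ≠ 0) : deriv (fun z : 𝕜 => 1 / z ^ 2) z = -2 / z ^ 3 := by
  simp only [one_div]
  refine ((hasDerivAt_pow 2 z).inv (pow_ne_zero 2 hz)).deriv.trans ?_
  field_simp
  ring

end rationalProfile

theorem conj_one_sub_one_div_neg_conj (z : ℂ) :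
    starRingEnd ℂ (1 - 1 / -starRingEnd ℂ z) = 1 + 1 / z := by
  simp [sub_eq_add_neg]

theorem one_sub_one_div_profile_eq {K : Type*} [Field K] {z : K} (hz : z ≠ 0) :
    2 * (1 - 1 / z) - 2 * (1 / z ^ 2) = -2 / z ^ 3 + 2 * (1 - 1 / z) ^ 2 * (1 + 1 / z) := by
  field_simp
  ring

theorem u0110_eq_nlsAnsatz : u0110 = nlsAnsatz (fun z => 1 - 1 / z) := rfl

/-- `u_{0110}(x,t) = e^{-2it}(1 - 1/(x+2it))` solves the nonlocal NLS equation
at every real point `(x,t) ≠ (0,0)`. -/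
theorem u0110_solves_nonlocal_NLS (x t : ℝ) (h : (x, t) ≠ (0, 0)) :
    nlnls u0110 x t := by
  have hz := ofReal_add_two_mul_I_mul_ofReal_ne_zero h
  rw [u0110_eq_nlsAnsatz]
  refine nlnls_nlsAnsatz (U := {0}ᶜ) (by fun_prop (disch := simp_all)) isOpen_compl_singleton hz ?_
  rw [deriv_one_sub_one_div, deriv_one_div_sq hz]
  beta_reduce
  rw [conj_one_sub_one_div_neg_conj]
  exact one_sub_one_div_profile_eq hz
end

section
/- The function u_{1010}(x,t) = e^{−2it} (1 + (16it − 4)/(16t^2 + 4x^2 + 1)) satisfies the nonlocal NLS equation i u_t(x,t) = u_xx(x,t) + 2 u(x,t)^2 u*(−x,t) at every real point (x,t). -/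
open scoped BigOperators

/-! Writing `u1010 = e^{-2it} v`, the unimodular phase drops out of the nonlocal NLS equation,
leaving `i v_t + 2 v = v_xx + 2 v(x,t)² v*(-x,t)` for the rational envelope
`v = 1 + (16it - 4)/D`, `D = 16t² + 4x² + 1`. Since `D > 0` and `D` is even in `x`, this is a
polynomial identity in `x`, `t` and `i` once the powers of `D` are cleared. -/

open Complex ComplexConjugate

lemma nlnls_phase_mul_iff (ω : ℝ) {v : ℝ → ℝ → ℂ} {x t : ℝ}
    (hv : DifferentiableAt ℝ (fun s => v x s) t) :
    nlnls (fun x t => cexp (-ω * I * t) * v x t) x t ↔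
      I * deriv (fun s => v x s) t + ω * v x t =
        deriv (fun y => deriv (fun w => v w t) y) x + 2 * v x t ^ 2 * conj (v (-x) t) := by
  have hphase : HasDerivAt (fun s : ℝ => cexp (-ω * I * s)) (cexp (-ω * I * t) * (-ω * I)) t := by
    simpa using ((hasDerivAt_id (t : ℂ)).const_mul (-ω * I)).cexp.comp_ofReal
  have hderiv : deriv (fun s : ℝ => cexp (-ω * I * s) * v x s) t =
      cexp (-ω * I * t) * (-ω * I) * v x t + cexp (-ω * I * t) * deriv (fun s => v x s) t :=
    (hphase.mul hv.hasDerivAt).deriv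
  have hconj : conj (cexp (-ω * I * t)) = (cexp (-ω * I * t))⁻¹ := by
    rw [← exp_conj, ← exp_neg]
    simp
  simp only [nlnls, hderiv, deriv_const_mul_field', map_mul, hconj]
  constructor <;> intro h <;> field_simp at h ⊢
  · linear_combination h + ω * v x t * I_sq
  · linear_combination h - ω * v x t * I_sq

noncomputable def den1010 (x t : ℝ) : ℂ := 16 * (t : ℂ) ^ 2 + 4 * (x : ℂ) ^ 2 + 1

noncomputable def u1010Envelope (x t : ℝ) : ℂ := 1 + (16 * I * t - 4) / den1010 x t

lemma den1010_ne_zero (x t : ℝ) : den1010 x t ≠ 0 := by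
  have hpos : 0 < 16 * t ^ 2 + 4 * x ^ 2 + 1 := by positivity
  unfold den1010
  exact_mod_cast hpos.ne'

lemma conj_u1010Envelope_neg (x t : ℝ) :
    conj (u1010Envelope (-x) t) = 1 + (-16 * I * t - 4) / den1010 x t := by
  simp [u1010Envelope, den1010, map_div₀, map_ofNat]

lemma hasDerivAt_den1010_space (x t : ℝ) :
    HasDerivAt (fun w : ℂ => 16 * (t : ℂ) ^ 2 + 4 * w ^ 2 + 1) (8 * (x : ℂ)) x :=
  ((((hasDerivAt_pow 2 (x : ℂ)).const_mul 4).const_add _).add_const 1).congr_deriv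
    (by norm_num; ring)

lemma hasDerivAt_u1010Envelope_time (x t : ℝ) :
    HasDerivAt (fun s => u1010Envelope x s)
      ((16 * I * den1010 x t - (16 * I * t - 4) * (32 * t)) / den1010 x t ^ 2) t := by
  have hnum : HasDerivAt (fun s : ℂ => 16 * I * s - 4) (16 * I) t := by
    simpa using ((hasDerivAt_id (t : ℂ)).const_mul (16 * I)).sub_const 4
  have hden : HasDerivAt (fun s : ℂ => 16 * s ^ 2 + 4 * (x : ℂ) ^ 2 + 1) (32 * (t : ℂ)) t :=
    ((((hasDerivAt_pow 2 (t : ℂ)).const_mul 16).add_const _).add_const _).congr_deriv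
      (by norm_num; ring)
  exact ((hnum.div hden (den1010_ne_zero x t)).const_add 1).comp_ofReal

lemma hasDerivAt_u1010Envelope_space (x t : ℝ) :
    HasDerivAt (fun w => u1010Envelope w t)
      (-(16 * I * t - 4) * (8 * x) / den1010 x t ^ 2) x :=
  ((((hasDerivAt_const _ (16 * I * t - 4)).div (hasDerivAt_den1010_space x t)
    (den1010_ne_zero x t)).const_add 1).comp_ofReal).congr_deriv (by rw [den1010]; ring)

lemma hasDerivAt_deriv_u1010Envelope_space (x t : ℝ) :
    HasDerivAt (fun y => deriv (fun w => u1010Envelope w t) y)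
      (-8 * (16 * I * t - 4) * (den1010 x t - 16 * x ^ 2) / den1010 x t ^ 3) x := by
  have hfirst : (fun y => deriv (fun w => u1010Envelope w t) y) =
      fun y : ℝ => -(16 * I * t - 4) * (8 * y) / den1010 y t ^ 2 :=
    funext fun y => (hasDerivAt_u1010Envelope_space y t).deriv
  have hnum : HasDerivAt (fun w : ℂ => -(16 * I * t - 4) * (8 * w)) (-(16 * I * t - 4) * 8) x := by
    simpa using ((hasDerivAt_id (x : ℂ)).const_mul 8).const_mul (-(16 * I * t - 4))
  have hD := den1010_ne_zero x t
  rw [hfirst]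
  exact ((hnum.div ((hasDerivAt_den1010_space x t).pow 2) (pow_ne_zero 2 hD)).comp_ofReal
    ).congr_deriv (by rw [den1010] at hD ⊢; simp only [Pi.pow_apply]; field_simp; ring)

lemma u1010Envelope_reduced_nlnls (x t : ℝ) :
    I * deriv (fun s => u1010Envelope x s) t + 2 * u1010Envelope x t =
      deriv (fun y => deriv (fun w => u1010Envelope w t) y) x +
        2 * u1010Envelope x t ^ 2 * conj (u1010Envelope (-x) t) := by
  rw [(hasDerivAt_u1010Envelope_time x t).deriv, (hasDerivAt_deriv_u1010Envelope_space x t).deriv,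
    conj_u1010Envelope_neg, u1010Envelope]
  have hD := den1010_ne_zero x t
  field_simp
  rw [den1010]
  ring_nf
  simp only [I_sq, I_pow_three]
  ring

/-- `u_{1010}(x,t) = e^{-2it}(1 + (16it-4)/(16t²+4x²+1))` solves the nonlocal
NLS equation at every real point `(x,t)`. -/
theorem u1010_solves_nonlocal_NLS (x t : ℝ) :
    nlnls u1010 x t := by
  have hu : u1010 = fun (x t : ℝ) => cexp (-(2 : ℝ) * I * t) * u1010Envelope x t := by
    funext x t
    simp [u1010, u1010Envelope, den1010]
  rw [hu, nlnls_phase_mul_iff 2 (hasDerivAt_u1010Envelope_time x t).differentiableAt]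
  exact_mod_cast u1010Envelope_reduced_nlnls x t
end

section
/- For every N ≥ 1 and any choice of the complex constants κ_j, the Adler–Moser polynomial Θ_N(z) is a monic polynomial in z of degree N(N+1)/2. -/
open scoped BigOperators

/-!
The polynomial `θ_k` has degree at most `k` and `z^k`-coefficient `1/k!`: in the Schur
expansion every `x_m` has degree at most one, and among the partitions of `k` only
`1 + ⋯ + 1` has `k` parts. Multiplying column `j` of `[θ_{2i+1-j}]` by `z^j` bounds the degree of
every entry of row `i` by `2i+1`, so the determinant has degree at most
`∑ (2i+1) - ∑ j = N(N+1)/2`, with top coefficient `det[1/(2i+1-j)!]`. As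
`1/(2i+1-j)! = (2i+1)(2i)⋯(2i+2-j)/(2i+1)!` and the falling factorials are monic of degree `j`,
this is a Vandermonde determinant in the nodes `2i+1` divided by `∏ (2i+1)!`, that is
`∏ 2^i i! / ∏ (2i+1)! = 1/c_N`, since `(2i+1)! = (2i+1)!! · 2^i i!`.
-/

open Polynomial Finset
open scoped Nat

namespace Polynomial

variable {R ι : Type*} [CommRing R]

theorem coeff_prod_sum_of_natDegree_le [DecidableEq ι] (s : Finset ι) (f : ι → R[X]) (d : ι → ℕ)
    (h : ∀ i ∈ s, (f i).natDegree ≤ d i) :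
    (∏ i ∈ s, f i).coeff (∑ i ∈ s, d i) = ∏ i ∈ s, (f i).coeff (d i) := by
  induction s using Finset.induction with
  | empty => simp
  | insert a s ha ih =>
    have hs : ∀ i ∈ s, (f i).natDegree ≤ d i := fun i hi => h i (mem_insert_of_mem hi)
    rw [prod_insert ha, sum_insert ha, prod_insert ha, ← ih hs]
    exact coeff_mul_add_eq_of_natDegree_le (h a (mem_insert_self a s))
      ((natDegree_prod_le s f).trans (sum_le_sum hs))

end Polynomial

namespace Matrix

variable {R n : Type*} [CommRing R] [Fintype n] [DecidableEq n]

theorem natDegree_det_le_of_natDegree_le (M : Matrix n n R[X]) (r : n → ℕ)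
    (h : ∀ i j, (M i j).natDegree ≤ r i) : M.det.natDegree ≤ ∑ i, r i := by
  rw [det_apply']
  refine natDegree_sum_le_of_forall_le _ _ fun σ _ => ?_
  refine natDegree_mul_le.trans ?_
  rw [natDegree_intCast, zero_add, ← Equiv.sum_comp σ r]
  exact (natDegree_prod_le _ _).trans (sum_le_sum fun i _ => h (σ i) i)

theorem coeff_det_of_natDegree_le (M : Matrix n n R[X]) (r : n → ℕ)
    (h : ∀ i j, (M i j).natDegree ≤ r i) :
    M.det.coeff (∑ i, r i) = (of fun i j => (M i j).coeff (r i)).det := by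
  rw [det_apply', det_apply', finsetSum_coeff]
  refine sum_congr rfl fun σ _ => ?_
  rw [coeff_intCast_mul, ← Equiv.sum_comp σ r,
    coeff_prod_sum_of_natDegree_le _ _ _ fun i _ => h (σ i) i]
  rfl

theorem natDegree_det_le_and_coeff_of_X_pow_mul_le (M : Matrix n n R[X]) (a b : n → ℕ) (d : ℕ)
    (hd : d + ∑ j, b j = ∑ i, a i) (h : ∀ i j, (X ^ b j * M i j).natDegree ≤ a i) :
    M.det.natDegree ≤ d ∧
      M.det.coeff d = (of fun i j => (X ^ b j * M i j).coeff (a i)).det := by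
  set M' : Matrix n n R[X] := of fun i j => X ^ b j * M i j
  have hshift : M'.det = X ^ (∑ j, b j) * M.det := by
    rw [det_mul_row, prod_pow_eq_pow_sum]
  have hdeg := natDegree_det_le_of_natDegree_le M' a h
  have hcoeff := coeff_det_of_natDegree_le M' a h
  rw [hshift] at hdeg hcoeff
  refine ⟨natDegree_le_iff_coeff_eq_zero.mpr fun m hm => ?_, ?_⟩
  · rw [← coeff_X_pow_mul _ (∑ j, b j)]
    exact coeff_eq_zero_of_natDegree_lt (by omega)
  · rw [← coeff_X_pow_mul, hd, hcoeff]
    rfl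

end Matrix

section SchurPolynomial

variable (x : ℕ → ℂ[X])

theorem natDegree_schurA_term_le (hx : ∀ m, (x m).natDegree ≤ 1) {k : ℕ} (l : Fin k → Fin (k + 1)) :
    (∏ i : Fin k, algebraMap ℂ ℂ[X] (((l i : ℕ)! : ℂ))⁻¹ * x (i + 1) ^ (l i : ℕ)).natDegree ≤
      ∑ i, (l i : ℕ) := by
  refine (natDegree_prod_le _ _).trans (sum_le_sum fun i _ => ?_)
  rw [algebraMap_eq]
  refine (natDegree_C_mul_le _ _).trans (natDegree_pow_le_of_le _ (hx _) |>.trans ?_)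
  rw [mul_one]

theorem sum_le_sum_succ_mul {k : ℕ} (l : Fin k → ℕ) : ∑ i, l i ≤ ∑ i : Fin k, ((i : ℕ) + 1) * l i :=
  sum_le_sum fun _ _ => Nat.le_mul_of_pos_left _ (Nat.succ_pos _)

theorem natDegree_schurA_le (hx : ∀ m, (x m).natDegree ≤ 1) (k : ℕ) :
    (schurA x k).natDegree ≤ k := by
  refine natDegree_sum_le_of_forall_le _ _ fun l hl => ?_
  exact (natDegree_schurA_term_le x hx l).trans
    ((sum_le_sum_succ_mul _).trans_eq (mem_filter.mp hl).2)

theorem eq_of_sum_succ_mul_eq_of_sum_eq {k : ℕ} (l : Fin (k + 1) → Fin (k + 2))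
    (hw : ∑ i : Fin (k + 1), ((i : ℕ) + 1) * (l i : ℕ) = k + 1) (hs : ∑ i, (l i : ℕ) = k + 1) :
    l = fun i => if i = 0 then Fin.last (k + 1) else 0 := by
  have hle : ∀ i : Fin (k + 1), i ∈ univ → (l i : ℕ) ≤ ((i : ℕ) + 1) * (l i : ℕ) :=
    fun _ _ => Nat.le_mul_of_pos_left _ (Nat.succ_pos _)
  have heq := (sum_eq_sum_iff_of_le hle).mp (hs.trans hw.symm)
  have hzero : ∀ i : Fin (k + 1), i ≠ 0 → (l i : ℕ) = 0 := fun i hi => by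
    have := heq i (mem_univ i)
    have hi' : (i : ℕ) ≠ 0 := Fin.val_ne_zero_iff.mpr hi
    nlinarith [Nat.pos_of_ne_zero hi']
  have hl0 : (l 0 : ℕ) = k + 1 := by
    rw [Fin.sum_univ_succ] at hs
    simpa [hzero _ (Fin.succ_ne_zero _)] using hs
  funext i
  split_ifs with hi
  · subst hi; exact Fin.ext hl0
  · exact Fin.ext (hzero i hi)

theorem coeff_schurA_self (hx : ∀ m, (x m).natDegree ≤ 1) (k : ℕ) :
    (schurA x k).coeff k = ((k ! : ℂ))⁻¹ * (x 1).coeff 1 ^ k := by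
  cases k with
  | zero => simp [schurA]
  | succ k =>
  set l₀ : Fin (k + 1) → Fin (k + 2) := fun i => if i = 0 then Fin.last (k + 1) else 0
  have hl₀ : l₀ ∈ univ.filter
      fun l : Fin (k + 1) → Fin (k + 2) => ∑ i : Fin (k + 1), ((i : ℕ) + 1) * (l i : ℕ) = k + 1 := by
    simp [l₀, Fin.sum_univ_succ]
  rw [schurA, finsetSum_coeff, sum_eq_single_of_mem l₀ hl₀]
  · rw [Fin.prod_univ_succ]
    simp [l₀, algebraMap_eq, coeff_C_mul, ← coeff_pow_of_natDegree_le (hx 1)]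
  · intro l hl hne
    refine coeff_eq_zero_of_natDegree_lt ((natDegree_schurA_term_le x hx l).trans_lt ?_)
    have hw := (mem_filter.mp hl).2
    have hle := (sum_le_sum_succ_mul fun i => (l i : ℕ)).trans_eq hw
    exact lt_of_le_of_ne hle fun hs => hne (eq_of_sum_succ_mul_eq_of_sum_eq l hw hs)

end SchurPolynomial

namespace Matrix

variable {R : Type*} [CommRing R] {n : ℕ}

theorem det_of_descFactorial [IsDomain R] (v : Fin n → ℕ) :
    (of fun i j : Fin n => ((v i).descFactorial j : R)).det = (vandermonde fun i => (v i : R)).det := by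
  rw [det_eval_matrixOfPolynomials_eq_det_vandermonde _ (fun j => descPochhammer R j)
    (fun j => descPochhammer_natDegree R j) (fun j => monic_descPochhammer R j)]
  simp only [descPochhammer_eval_eq_descFactorial]

theorem det_vandermonde_const_mul (c : R) (v : Fin n → R) :
    (vandermonde fun i => c * v i).det = c ^ (∑ j : Fin n, (j : ℕ)) * (vandermonde v).det := by
  rw [← prod_pow_eq_pow_sum, ← det_mul_row]
  congr 1
  ext i j
  simp [vandermonde_apply, mul_pow]

theorem det_vandermonde_natCast (n : ℕ) :
    (vandermonde fun i : Fin n => (i : R)).det = ∏ i ∈ range n, (i ! : R) := by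
  cases n with
  | zero => simp
  | succ n =>
    rw [det_vandermonde_id_eq_superFactorial, ← Nat.prod_range_succ_factorial]
    push_cast
    rfl

end Matrix

theorem prod_range_factorial_two_mul_add_one (N : ℕ) :
    ∏ i ∈ range N, (2 * i + 1)! = cDF N * (2 ^ (∑ i ∈ range N, i) * ∏ i ∈ range N, i !) := by
  have h : ∀ i, (2 * i + 1)! = (2 * i + 1)‼ * (2 ^ i * i !) := fun i => by
    rw [← Nat.doubleFactorial_two_mul, Nat.factorial_eq_mul_doubleFactorial]
  rw [cDF, ← prod_pow_eq_pow_sum, ← prod_mul_distrib, ← prod_mul_distrib]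
  exact prod_congr rfl fun i _ => h i

section AdlerMoser

variable (κ : ℕ → ℂ)

theorem natDegree_thetaPoly_le (k : ℕ) : (thetaPoly κ k).natDegree ≤ k :=
  natDegree_schurA_le _ (fun m => by split_ifs <;> simp) k

theorem coeff_thetaPoly_self (k : ℕ) : (thetaPoly κ k).coeff k = ((k ! : ℂ))⁻¹ := by
  rw [thetaPoly, coeff_schurA_self _ (fun m => by split_ifs <;> simp)]
  simp

theorem thetaPolyZ_natCast_sub {a b : ℕ} (h : b ≤ a) :
    thetaPolyZ κ ((a : ℤ) - b) = thetaPoly κ (a - b) := by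
  rw [thetaPolyZ, if_pos (by omega)]
  congr
  omega

theorem thetaPolyZ_natCast_sub_of_lt {a b : ℕ} (h : a < b) : thetaPolyZ κ ((a : ℤ) - b) = 0 :=
  if_neg (by omega)

theorem natDegree_X_pow_mul_thetaPolyZ_le (a b : ℕ) :
    (X ^ b * thetaPolyZ κ ((a : ℤ) - b)).natDegree ≤ a := by
  rcases le_or_gt b a with h | h
  · rw [thetaPolyZ_natCast_sub κ h]
    refine natDegree_mul_le.trans ?_
    have := natDegree_thetaPoly_le κ (a - b)
    rw [natDegree_X_pow]
    omega
  · simp [thetaPolyZ_natCast_sub_of_lt κ h]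

theorem coeff_X_pow_mul_thetaPolyZ (a b : ℕ) :
    (X ^ b * thetaPolyZ κ ((a : ℤ) - b)).coeff a = ((a ! : ℂ))⁻¹ * a.descFactorial b := by
  rcases le_or_gt b a with h | h
  · rw [thetaPolyZ_natCast_sub κ h, coeff_X_pow_mul', if_pos h, coeff_thetaPoly_self,
      ← Nat.factorial_mul_descFactorial h]
    have : ((a - b)! : ℂ) ≠ 0 := Nat.cast_ne_zero.mpr (Nat.factorial_ne_zero _)
    have : (a.descFactorial b : ℂ) ≠ 0 := Nat.cast_ne_zero.mpr (Nat.descFactorial_pos.mpr h).ne'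
    push_cast
    field_simp
  · simp [thetaPolyZ_natCast_sub_of_lt κ h, Nat.descFactorial_eq_zero_iff_lt.mpr h]

end AdlerMoser

theorem det_inv_factorial_mul_descFactorial_odd (N : ℕ) :
    (Matrix.of fun i j : Fin N =>
      (((2 * i + 1 : ℕ)! : ℂ))⁻¹ * (2 * i + 1 : ℕ).descFactorial j).det = ((cDF N : ℂ))⁻¹ := by
  have hvdm : (Matrix.vandermonde fun i : Fin N => (((2 * i + 1 : ℕ)) : ℂ)).det =
      2 ^ (∑ i ∈ range N, i) * ∏ i ∈ range N, (i ! : ℂ) := by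
    push_cast
    rw [Matrix.det_vandermonde_add, Matrix.det_vandermonde_const_mul,
      Matrix.det_vandermonde_natCast, Fin.sum_univ_eq_sum_range (fun i => i)]
  have hfact := congrArg (Nat.cast : ℕ → ℂ) (prod_range_factorial_two_mul_add_one N)
  push_cast at hfact
  have hne : ∏ i ∈ range N, (((2 * i + 1)! : ℕ) : ℂ) ≠ 0 :=
    prod_ne_zero_iff.mpr fun i _ => Nat.cast_ne_zero.mpr (Nat.factorial_ne_zero _)
  rw [hfact] at hne
  have hrows := Matrix.det_mul_column (fun i : Fin N => (((2 * i + 1 : ℕ)! : ℂ))⁻¹)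
    (Matrix.of fun i j : Fin N => ((2 * i + 1 : ℕ).descFactorial j : ℂ))
  simp only [Matrix.of_apply] at hrows
  rw [hrows, Matrix.det_of_descFactorial, hvdm,
    Fin.prod_univ_eq_prod_range (fun i => (((2 * i + 1)! : ℕ) : ℂ)⁻¹), prod_inv_distrib, hfact,
    mul_inv, mul_assoc, inv_mul_cancel₀ (right_ne_zero_of_mul hne), mul_one]

theorem triangle_add_sum_fin_eq_sum_fin_odd (N : ℕ) :
    N * (N + 1) / 2 + ∑ j : Fin N, (j : ℕ) = ∑ i : Fin N, (2 * (i : ℕ) + 1) := by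
  rw [Fin.sum_univ_eq_sum_range (fun j => j), Fin.sum_univ_eq_sum_range (fun i => 2 * i + 1),
    sum_add_distrib, ← mul_sum, sum_const, card_range, smul_eq_mul, mul_one]
  have hgauss := sum_range_id_mul_two N
  have hsucc : N * (N + 1) = N * (N - 1) + 2 * N := by cases N <;> simp; ring
  generalize N * (N + 1) = A, N * (N - 1) = B at *
  omega

theorem adlerMoser_monic_degree_general (N : ℕ) (κ : ℕ → ℂ) :
    (adlerMoserPoly κ N).Monic ∧ (adlerMoserPoly κ N).natDegree = N * (N + 1) / 2 := by
  set M := Matrix.of fun i j : Fin N => thetaPolyZ κ (2 * (i : ℤ) + 1 - (j : ℤ))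
  have hM : ∀ i j, M i j = thetaPolyZ κ ((2 * i + 1 : ℕ) - (j : ℕ)) := fun i j => by
    simp only [M, Matrix.of_apply]; push_cast; rfl
  obtain ⟨hdeg, hcoeff⟩ := M.natDegree_det_le_and_coeff_of_X_pow_mul_le (fun i => 2 * i + 1)
    (fun j => j) _ (triangle_add_sum_fin_eq_sum_fin_odd N)
    fun i j => hM i j ▸ natDegree_X_pow_mul_thetaPolyZ_le κ _ _
  simp only [hM, coeff_X_pow_mul_thetaPolyZ, det_inv_factorial_mul_descFactorial_odd] at hcoeff
  have hlead : (adlerMoserPoly κ N).coeff (N * (N + 1) / 2) = 1 := by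
    rw [adlerMoserPoly, coeff_C_mul, hcoeff, mul_inv_cancel₀]
    exact Nat.cast_ne_zero.mpr (prod_ne_zero_iff.mpr fun j _ => (Nat.doubleFactorial_pos _).ne')
  have hle : (adlerMoserPoly κ N).natDegree ≤ N * (N + 1) / 2 :=
    (natDegree_C_mul_le _ _).trans hdeg
  exact ⟨monic_of_natDegree_le_of_coeff_eq_one _ hle hlead,
    le_antisymm hle (le_natDegree_of_ne_zero (by simp [hlead]))⟩

/-- for every `N ≥ 1` and any constants `κ_j`, the Adler–Moser polynomial
`Θ_N` is monic of degree `N(N+1)/2`. -/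
theorem adlerMoser_monic_degree (N : ℕ) (hN : 1 ≤ N) (κ : ℕ → ℂ) :
    (adlerMoserPoly κ N).Monic ∧ (adlerMoserPoly κ N).natDegree = N * (N + 1) / 2 :=
  adlerMoser_monic_degree_general N κ
end

section
/- Let N ≥ 1 and let x^+ = (x_1^+, x_2^+, ...), x^− = (x_1^−, x_2^−, ...), and s = (s_1, s_2, ...) be arbitrary complex sequences. Set m_{i,j} = Σ_{v=0}^{min(i,j)} 4^{−v} S_{i−v}(x^+ + v s) S_{j−v}(x^− + v s). Then det_{1≤i,j≤N}[ m_{2i−1, 2j−1} ] = Σ_{0 ≤ v_1 < v_2 < ⋯ < v_N ≤ 2N−1} det_{1≤i,j≤N}[ 2^{−v_j} S_{2i−1−v_j}(x^+ + v_j s) ] · det_{1≤i,j≤N}[ 2^{−v_j} S_{2i−1−v_j}(x^− + v_j s) ]. -/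
open scoped BigOperators

/-!
Since `4⁻ᵛ = 2⁻ᵛ · 2⁻ᵛ` and `S_k = 0` for `k < 0`, the entry `m_{2i-1,2j-1}` is the `(i,j)` entry
of `A⁺ (A⁻)ᵀ`, where `A^±` is the `N × 2N` matrix with entries `2⁻ᵛ S_{2i-1-v}(x^± + v s)`,
`0 ≤ v ≤ 2N-1`. The expansion is then the Cauchy–Binet formula for this product.
-/

open Finset Equiv Matrix

theorem Finset.sum_injective_eq_sum_strictMono_sum_perm {α M : Type*} [LinearOrder α]
    [Fintype α] [AddCommMonoid M] {n : ℕ} (F : (Fin n → α) → M) :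
    ∑ f with Function.Injective f, F f =
      ∑ v with StrictMono v, ∑ σ : Perm (Fin n), F (v ∘ σ) := by
  rw [← sum_product']
  symm
  refine sum_nbij' (fun p => p.1 ∘ p.2) (fun f => (f ∘ Tuple.sort f, (Tuple.sort f)⁻¹))
    ?_ ?_ ?_ ?_ ?_
  · simp only [mem_product, mem_filter_univ, mem_univ, and_true]
    exact fun p hp => hp.injective.comp p.2.injective
  · simp only [mem_product, mem_filter_univ, mem_univ, and_true]
    exact fun f hf =>
      (Tuple.monotone_sort f).strictMono_of_injective (hf.comp (Tuple.sort f).injective)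
  · intro p hp
    simp only [mem_product, mem_filter_univ] at hp
    have hcancel : (p.1 ∘ p.2) ∘ ⇑p.2⁻¹ = p.1 := by ext; simp
    have hsort :=
      Tuple.unique_monotone (hcancel ▸ hp.1.monotone) (Tuple.monotone_sort (p.1 ∘ p.2))
    rw [hcancel] at hsort
    have hσ : Tuple.sort (p.1 ∘ p.2) = p.2⁻¹ :=
      Equiv.ext fun i => (hp.1.injective.comp p.2.injective) (by
        simpa [hcancel] using (congrFun hsort i).symm)
    rw [hσ, hcancel, inv_inv]
  · intro f _
    ext i
    simp
  · intro p _
    rfl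

namespace Matrix

variable {R : Type*} [CommRing R]

section

variable {n m : Type*} [Fintype n] [DecidableEq n]

theorem det_mul_eq_sum_prod_mul_det_submatrix [Fintype m] (A : Matrix n m R)
    (B : Matrix m n R) :
    (A * B).det = ∑ f : n → m, (∏ i, B (f i) i) * (A.submatrix id f).det := by
  simp only [det_apply', mul_apply, prod_univ_sum, Fintype.piFinset_univ, mul_sum,
    submatrix_apply, id]
  rw [sum_comm]
  refine sum_congr rfl fun f _ => sum_congr rfl fun σ _ => ?_
  rw [prod_mul_distrib]
  ring

theorem sum_perm_prod_mul_det_submatrix_comp (A : Matrix n m R) (B : Matrix m n R) (v : n → m) :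
    ∑ σ : Perm n, (∏ i, B (v (σ i)) i) * (A.submatrix id (v ∘ σ)).det =
      (B.submatrix v id).det * (A.submatrix id v).det := by
  have hperm : ∀ σ : Perm n,
      (A.submatrix id (v ∘ σ)).det = Perm.sign σ * (A.submatrix id v).det :=
    fun σ => det_permute' σ (A.submatrix id v)
  simp only [hperm, det_apply' (B.submatrix v id), submatrix_apply, id, sum_mul]
  exact sum_congr rfl fun σ _ => by ring

end

theorem det_mul_eq_sum_strictMono_det_submatrix {n : ℕ} {m : Type*} [Fintype m]
    [LinearOrder m] (A : Matrix (Fin n) m R) (B : Matrix m (Fin n) R) :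
    (A * B).det =
      ∑ v : Fin n → m with StrictMono v, (A.submatrix id v).det * (B.submatrix v id).det := by
  rw [det_mul_eq_sum_prod_mul_det_submatrix, ← sum_filter_of_ne (p := Function.Injective)]
  · rw [sum_injective_eq_sum_strictMono_sum_perm]
    exact sum_congr rfl fun v _ =>
      (sum_perm_prod_mul_det_submatrix_comp A B v).trans (mul_comm _ _)
  · intro f _ hdet
    by_contra hf
    obtain ⟨i, j, hij, hne⟩ := Function.not_injective_iff.mp hf
    exact hdet (by rw [det_zero_of_column_eq hne fun k => by simp [hij], mul_zero])

end Matrix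

theorem schurZ_natCast (x : ℕ → ℂ) (k : ℕ) : schurZ x k = schurC x k := by
  simp [schurZ]

theorem schurZ_of_neg (x : ℕ → ℂ) {k : ℤ} (hk : k < 0) : schurZ x k = 0 :=
  if_neg hk.not_ge

noncomputable def weightedSchurMatrix (x s : ℕ → ℂ) (N M : ℕ) : Matrix (Fin N) (Fin M) ℂ :=
  of fun i k => ((2 : ℂ) ^ (k : ℕ))⁻¹ *
    schurZ (fun m => x m + ((k : ℕ) : ℂ) * s m) (2 * (i : ℤ) + 1 - ((k : ℕ) : ℤ))

theorem mGen_eq_sum_range (xp xm s : ℕ → ℂ) {i j M : ℕ} (h : min i j < M) :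
    mGen xp xm s i j = ∑ k ∈ range M,
      ((2 : ℂ) ^ k)⁻¹ * schurZ (fun m => xp m + (k : ℂ) * s m) ((i : ℤ) - k) *
        (((2 : ℂ) ^ k)⁻¹ * schurZ (fun m => xm m + (k : ℂ) * s m) ((j : ℤ) - k)) := by
  rw [mGen, ← sum_subset (range_subset_range.mpr (by omega : min i j + 1 ≤ M))]
  · refine sum_congr rfl fun k hk => ?_
    have hk : k ≤ i ∧ k ≤ j := by rw [mem_range] at hk; omega
    rw [← Nat.cast_sub hk.1, ← Nat.cast_sub hk.2, schurZ_natCast, schurZ_natCast,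
      show (4 : ℂ) ^ k = 2 ^ k * 2 ^ k by rw [← mul_pow]; norm_num, mul_inv]
    ring
  · intro k _ hk
    obtain hki | hkj : (i : ℤ) - k < 0 ∨ (j : ℤ) - k < 0 := by rw [mem_range] at hk; omega
    · rw [schurZ_of_neg _ hki, mul_zero, zero_mul]
    · rw [schurZ_of_neg _ hkj, mul_zero, mul_zero]

theorem mGen_odd_eq_mul_transpose (xp xm s : ℕ → ℂ) (N : ℕ) :
    of (fun i j : Fin N => mGen xp xm s (2 * (i : ℕ) + 1) (2 * (j : ℕ) + 1)) =
      weightedSchurMatrix xp s N (2 * N) * (weightedSchurMatrix xm s N (2 * N))ᵀ := by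
  ext i j
  rw [of_apply, mGen_eq_sum_range xp xm s (M := 2 * N) (by omega),
    ← Fin.sum_univ_eq_sum_range]
  simp only [weightedSchurMatrix, mul_apply, transpose_apply, of_apply]
  push_cast
  rfl

theorem tau_laplace_expansion_general (N : ℕ) (xp xm s : ℕ → ℂ) :
    Matrix.det (Matrix.of fun i j : Fin N =>
        mGen xp xm s (2 * (i : ℕ) + 1) (2 * (j : ℕ) + 1)) =
      ∑ v ∈ @Finset.filter (Fin N → Fin (2 * N)) (fun v => StrictMono v)
          (Classical.decPred _) Finset.univ,
        Matrix.det (Matrix.of fun i j : Fin N =>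
          ((2 : ℂ) ^ (v j : ℕ))⁻¹ *
            schurZ (fun m => xp m + ((v j : ℕ) : ℂ) * s m)
              (2 * (i : ℤ) + 1 - ((v j : ℕ) : ℤ))) *
        Matrix.det (Matrix.of fun i j : Fin N =>
          ((2 : ℂ) ^ (v j : ℕ))⁻¹ *
            schurZ (fun m => xm m + ((v j : ℕ) : ℂ) * s m)
              (2 * (i : ℤ) + 1 - ((v j : ℕ) : ℤ))) := by
  rw [filter_congr_decidable, mGen_odd_eq_mul_transpose, det_mul_eq_sum_strictMono_det_submatrix]
  simp_rw [← transpose_submatrix, det_transpose]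
  rfl

/-- Laplace (Cauchy–Binet) expansion of `det[m_{2i-1,2j-1}]` into sums over
`0 ≤ v₁ < ⋯ < v_N ≤ 2N-1` of products of two determinants. -/
theorem tau_laplace_expansion (N : ℕ) (hN : 1 ≤ N) (xp xm s : ℕ → ℂ) :
    Matrix.det (Matrix.of fun i j : Fin N =>
        mGen xp xm s (2 * (i : ℕ) + 1) (2 * (j : ℕ) + 1)) =
      ∑ v ∈ @Finset.filter (Fin N → Fin (2 * N)) (fun v => StrictMono v)
          (Classical.decPred _) Finset.univ,
        Matrix.det (Matrix.of fun i j : Fin N =>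
          ((2 : ℂ) ^ (v j : ℕ))⁻¹ *
            schurZ (fun m => xp m + ((v j : ℕ) : ℂ) * s m)
              (2 * (i : ℤ) + 1 - ((v j : ℕ) : ℤ))) *
        Matrix.det (Matrix.of fun i j : Fin N =>
          ((2 : ℂ) ^ (v j : ℕ))⁻¹ *
            schurZ (fun m => xm m + ((v j : ℕ) : ℂ) * s m)
              (2 * (i : ℤ) + 1 - ((v j : ℕ) : ℤ))) :=
  tau_laplace_expansion_general N xp xm s
end

section
/- (Laplace/Cauchy–Binet expansion, general block case.) Let N̂_1, N̂_2 ≥ 0 with N̂ = N̂_1 + N̂_2 ≥ 1, let x^+, x^−, s be arbitrary complex sequences, and set m_{i,j} = Σ_{v=0}^{min(i,j)} 4^{−v} S_{i−v}(x^+ + v s) S_{j−v}(x^− + v s). Then the determinant of the N̂ × N̂ matrix obtained by stacking the block (m_{2k−1, 2l−1})_{1≤k≤N̂_1, 1≤l≤N̂} on top of the block (m_{2k−2, 2l−1})_{1≤k≤N̂_2, 1≤l≤N̂} equals Σ_{0 ≤ v_1 < ⋯ < v_{N̂} ≤ 2N̂−1} det_{1≤i,j≤N̂}[ 2^{−v_j}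 S_{2i−1−v_j}(x^− + v_j s) ] · det[ D(v) ], where D(v) is the N̂ × N̂ matrix whose first N̂_1 rows are (2^{−v_j} S_{2i−1−v_j}(x^+ + v_j s))_{1≤i≤N̂_1} and whose last N̂_2 rows are (2^{−v_j} S_{2i−2−v_j}(x^+ + v_j s))_{1≤i≤N̂_2}. -/
open scoped BigOperators

/-- Cauchy–Binet formula. -/
theorem my_cauchy_binet {R : Type*} [CommRing R] {n m : ℕ}
    (A : Matrix (Fin n) (Fin m) R) (B : Matrix (Fin m) (Fin n) R) :
    (A * B).det =
      ∑ v ∈ @Finset.filter (Fin n → Fin m) (fun v => StrictMono v)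
          (Classical.decPred _) Finset.univ,
        (A.submatrix id v).det * (B.submatrix v id).det := by
  classical
  have step1 : (A * B).det =
      ∑ f : Fin n → Fin m,
        (A.submatrix id f).det * ∏ i, B (f i) i := by
    simp only [Matrix.det_apply', Matrix.mul_apply, Finset.prod_univ_sum, Finset.mul_sum,
      Fintype.piFinset_univ]
    rw [Finset.sum_comm]
    refine Finset.sum_congr rfl fun f _ => ?_
    rw [Finset.sum_mul]
    refine Finset.sum_congr rfl fun σ _ => ?_
    simp only [Matrix.submatrix_apply, id_eq, Finset.prod_mul_distrib]
    ring
  rw [step1, ← Finset.sum_filter_add_sum_filter_not Finset.univ (fun f => Function.Injective f)]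
  have hnot : ∑ f ∈ Finset.univ.filter (fun f : Fin n → Fin m => ¬ Function.Injective f),
      (A.submatrix id f).det * ∏ i, B (f i) i = 0 := by
    refine Finset.sum_eq_zero fun f hf => ?_
    simp only [Finset.mem_filter, Finset.mem_univ, true_and] at hf
    rw [Function.Injective] at hf
    push_neg at hf
    obtain ⟨i, j, hij, hne⟩ := hf
    rw [Matrix.det_zero_of_column_eq hne (fun k => by simp [hij]), zero_mul]
  rw [hnot, add_zero]
  -- key: sort of a strictly monotone map composed with a permutation
  have hkey : ∀ (v : Fin n → Fin m), StrictMono v → ∀ σ : Equiv.Perm (Fin n),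
      Tuple.sort (v ∘ σ) = σ⁻¹ := by
    intro v hv σ
    have hinj : Function.Injective (v ∘ σ) := hv.injective.comp σ.injective
    have h1 : StrictMono ((v ∘ σ) ∘ Tuple.sort (v ∘ σ)) :=
      (Tuple.monotone_sort _).strictMono_of_injective
        (hinj.comp (Tuple.sort (v ∘ σ)).injective)
    have h2 : (v ∘ σ) ∘ Tuple.sort (v ∘ σ) = v := by
      haveI : WellFoundedLT (Fin n) := inferInstance
      refine (StrictMono.range_inj (β := Fin n) (γ := Fin m) h1 hv).1 ?_
      have hre : ((v ∘ σ) ∘ (Tuple.sort (v ∘ σ)) : Fin n → Fin m)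
          = v ∘ (σ ∘ (Tuple.sort (v ∘ σ))) := rfl
      rw [hre, Set.range_comp,
        (σ.surjective.comp (Tuple.sort (v ∘ σ)).surjective).range_eq, Set.image_univ]
    have h3 : ∀ x, σ (Tuple.sort (v ∘ σ) x) = x := by
      intro x
      apply hv.injective
      simpa using congrFun h2 x
    refine Equiv.ext fun x => ?_
    apply σ.injective
    rw [h3 x]
    simp
  have expand : ∀ v : Fin n → Fin m,
      (∑ σ : Equiv.Perm (Fin n),
        (A.submatrix id (v ∘ σ)).det * ∏ i, B ((v ∘ σ) i) i)
      = (A.submatrix id v).det * (B.submatrix v id).det := by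
    intro v
    rw [Matrix.det_apply' (B.submatrix v id), Finset.mul_sum]
    refine Finset.sum_congr rfl fun σ _ => ?_
    have hsub : A.submatrix id (v ∘ σ) = (A.submatrix id v).submatrix id σ := rfl
    rw [hsub, Matrix.det_permute']
    simp only [Matrix.submatrix_apply, id_eq, Function.comp_apply]
    ring
  rw [← Finset.sum_congr rfl (fun v _ => expand v)]
  rw [← Finset.sum_product' (s := @Finset.filter (Fin n → Fin m) (fun v => StrictMono v)
      (Classical.decPred _) Finset.univ) (t := (Finset.univ : Finset (Equiv.Perm (Fin n))))]
  refine Finset.sum_nbij' (fun f => (f ∘ Tuple.sort f, (Tuple.sort f)⁻¹))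
    (fun p => p.1 ∘ (p.2 : Equiv.Perm (Fin n))) ?_ ?_ ?_ ?_ ?_
  · intro f hf
    simp only [Finset.mem_filter, Finset.mem_univ, true_and] at hf ⊢
    rw [Finset.mem_product]
    refine ⟨?_, Finset.mem_univ _⟩
    simp only [Finset.mem_filter, Finset.mem_univ, true_and]
    exact (Tuple.monotone_sort f).strictMono_of_injective
      (hf.comp (Tuple.sort f).injective)
  · intro p hp
    rw [Finset.mem_product] at hp
    simp only [Finset.mem_filter, Finset.mem_univ, true_and] at hp ⊢
    exact hp.1.injective.comp p.2.injective
  · intro f hf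
    funext x
    simp
  · intro p hp
    obtain ⟨w, σ⟩ := p
    rw [Finset.mem_product] at hp
    simp only [Finset.mem_filter, Finset.mem_univ, true_and] at hp
    show ((w ∘ ⇑σ) ∘ ⇑(Tuple.sort (w ∘ ⇑σ)), (Tuple.sort (w ∘ ⇑σ))⁻¹) = (w, σ)
    rw [hkey w hp.1 σ, inv_inv]
    have hcomp : (w ∘ ⇑σ) ∘ ⇑(σ⁻¹) = w := by funext x; simp
    rw [hcomp]
  · intro f hf
    have hcomp : ((f ∘ ⇑(Tuple.sort f)) ∘ ⇑(Tuple.sort f)⁻¹) = f := by funext x; simp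
    simp only [hcomp]

/-- Bridge: `mGen` as a matrix-product entry over `Fin M`. -/
theorem mGen_eq_sum (xp xm s : ℕ → ℂ) (i j M : ℕ) (hj : j < M) :
    mGen xp xm s i j = ∑ v : Fin M,
      ((((2:ℂ) ^ (v:ℕ))⁻¹ * schurZ (fun m => xp m + ((v:ℕ) : ℂ) * s m) ((i:ℤ) - (v:ℕ))) *
       (((2:ℂ) ^ (v:ℕ))⁻¹ * schurZ (fun m => xm m + ((v:ℕ) : ℂ) * s m) ((j:ℤ) - (v:ℕ)))) := by
  rw [mGen, Fin.sum_univ_eq_sum_range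
    (fun v => ((((2:ℂ) ^ v)⁻¹ * schurZ (fun m => xp m + (v : ℂ) * s m) ((i:ℤ) - v)) *
       (((2:ℂ) ^ v)⁻¹ * schurZ (fun m => xm m + (v : ℂ) * s m) ((j:ℤ) - v))))]
  have hvan : ∀ v ∈ Finset.range M, v ∉ Finset.range (min i j + 1) →
      ((((2:ℂ) ^ v)⁻¹ * schurZ (fun m => xp m + (v : ℂ) * s m) ((i:ℤ) - v)) *
       (((2:ℂ) ^ v)⁻¹ * schurZ (fun m => xm m + (v : ℂ) * s m) ((j:ℤ) - v))) = 0 := by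
    intro v hv hnv
    simp only [Finset.mem_range] at hv hnv
    rcases Nat.lt_or_ge i v with h | h
    · have hz : schurZ (fun m => xp m + (v : ℂ) * s m) ((i:ℤ) - v) = 0 := by
        rw [schurZ, if_neg (by omega)]
      rw [hz]
      ring
    · have hz : schurZ (fun m => xm m + (v : ℂ) * s m) ((j:ℤ) - v) = 0 := by
        rw [schurZ, if_neg (by omega)]
      rw [hz]
      ring
  rw [← Finset.sum_subset (s₁ := Finset.range (min i j + 1))
      (by intro x hx; simp only [Finset.mem_range] at *; omega) hvan]
  · refine Finset.sum_congr rfl fun v hv => ?_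
    simp only [Finset.mem_range] at hv
    have e1 : schurZ (fun m => xp m + (v : ℂ) * s m) ((i:ℤ) - v)
        = schurC (fun m => xp m + (v : ℂ) * s m) (i - v) := by
      rw [schurZ, if_pos (by omega)]
      congr 1
      omega
    have e2 : schurZ (fun m => xm m + (v : ℂ) * s m) ((j:ℤ) - v)
        = schurC (fun m => xm m + (v : ℂ) * s m) (j - v) := by
      rw [schurZ, if_pos (by omega)]
      congr 1
      omega
    rw [e1, e2]
    have h4 : (4:ℂ) ^ v = 2 ^ v * 2 ^ v := by rw [← mul_pow]; norm_num
    rw [h4, mul_inv]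
    ring

/-- Laplace/Cauchy–Binet expansion, general block case: the determinant of the
stacked block matrix `[(m_{2k-1,2l-1}); (m_{2k-2,2l-1})]` expands as a sum over
`0 ≤ v₁ < ⋯ < v_{N̂} ≤ 2N̂-1` of products of two determinants. -/
theorem tau_laplace_expansion_general_block
    (N₁ N₂ : ℕ) (hN : 1 ≤ N₁ + N₂) (xp xm s : ℕ → ℂ) :
    Matrix.det (Matrix.of fun r c : Fin (N₁ + N₂) =>
        mGen xp xm s
          (if (r : ℕ) < N₁ then 2 * (r : ℕ) + 1 else 2 * ((r : ℕ) - N₁))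
          (2 * (c : ℕ) + 1)) =
      ∑ v ∈ @Finset.filter (Fin (N₁ + N₂) → Fin (2 * (N₁ + N₂))) (fun v => StrictMono v)
          (Classical.decPred _) Finset.univ,
        Matrix.det (Matrix.of fun i j : Fin (N₁ + N₂) =>
          ((2 : ℂ) ^ (v j : ℕ))⁻¹ *
            schurZ (fun m => xm m + ((v j : ℕ) : ℂ) * s m)
              (2 * (i : ℤ) + 1 - ((v j : ℕ) : ℤ))) *
        Matrix.det (Matrix.of fun i j : Fin (N₁ + N₂) =>
          ((2 : ℂ) ^ (v j : ℕ))⁻¹ *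
            schurZ (fun m => xp m + ((v j : ℕ) : ℂ) * s m)
              ((if (i : ℕ) < N₁ then 2 * (i : ℤ) + 1 else 2 * ((i : ℤ) - (N₁ : ℤ))) -
                ((v j : ℕ) : ℤ))) := by
  classical
  set A : Matrix (Fin (N₁ + N₂)) (Fin (2 * (N₁ + N₂))) ℂ := Matrix.of fun r v =>
    ((2 : ℂ) ^ (v : ℕ))⁻¹ *
      schurZ (fun m => xp m + ((v : ℕ) : ℂ) * s m)
        ((if (r : ℕ) < N₁ then 2 * (r : ℤ) + 1 else 2 * ((r : ℤ) - (N₁ : ℤ))) -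
          ((v : ℕ) : ℤ)) with hA
  set B : Matrix (Fin (2 * (N₁ + N₂))) (Fin (N₁ + N₂)) ℂ := Matrix.of fun v c =>
    ((2 : ℂ) ^ (v : ℕ))⁻¹ *
      schurZ (fun m => xm m + ((v : ℕ) : ℂ) * s m)
        (2 * (c : ℤ) + 1 - ((v : ℕ) : ℤ)) with hB
  have hmat : (Matrix.of fun r c : Fin (N₁ + N₂) =>
      mGen xp xm s
        (if (r : ℕ) < N₁ then 2 * (r : ℕ) + 1 else 2 * ((r : ℕ) - N₁))
        (2 * (c : ℕ) + 1)) = A * B := by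
    ext r c
    rw [Matrix.of_apply, Matrix.mul_apply,
      mGen_eq_sum xp xm s _ _ (2 * (N₁ + N₂)) (by omega)]
    refine Finset.sum_congr rfl fun v _ => ?_
    rw [hA, hB, Matrix.of_apply, Matrix.of_apply]
    have hidx : (((if (r : ℕ) < N₁ then 2 * (r : ℕ) + 1 else 2 * ((r : ℕ) - N₁)) : ℕ) : ℤ)
        = (if (r : ℕ) < N₁ then 2 * (r : ℤ) + 1 else 2 * ((r : ℤ) - (N₁ : ℤ))) := by
      split_ifs with h <;> push_cast <;> omega
    have hjdx : ((2 * (c : ℕ) + 1 : ℕ) : ℤ) = 2 * (c : ℤ) + 1 := by push_cast; ring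
    rw [hidx, hjdx]
  rw [hmat, my_cauchy_binet A B]
  refine Finset.sum_congr rfl fun v _ => ?_
  rw [mul_comm]
  congr 1
  · rw [← Matrix.det_transpose (B.submatrix v id)]
    congr 1
end
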